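/- arXiv:1409.1206 — 3 statements merged into one kernel-verified Lean document; each statement's English description precedes it below -/
import Mathlib

section
/- Let ℒ be the Laplace transform on L²(ℝ₊), (ℒf)(t) = ∫₀^∞ e^{-xt} f(x) dx, and let U : L²(ℝ₊) → L²(ℝ) be the unitary operator (Uf)(x) = e^{x/2} f(e^x). Then U ℒ² U* is the operator of convolution with the function x ↦ 1/(2 cosh(x/2)); equivalently, the Carleman operator (the integral operator on L²(ℝ₊) with kernel 1/(t+s)) is unitarily equivalent via U to convolution with 1/(2 cosh(x/2)) on L²(ℝ). -/
/-!
By Fubini, `ℒ²` is the integral operator with kernel `∫₀^∞ e^{-(t+s)x} dx = 1/(t+s)`. Under the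
substitution `t = eˣ`, `s = eʸ`, the weights `e^{x/2}`, `e^{y/2}` contributed by `U` and `U*` turn
this kernel into `e^{x/2} e^{y/2} / (eˣ + eʸ) = 1/(2 cosh((x - y)/2))`, a function of `x - y`.
-/

open MeasureTheory Real Set

local notation "μ₊" => volume.restrict (Ioi (0 : ℝ))

theorem Real.exp_quasiMeasurePreserving_Ioi :
    Measure.QuasiMeasurePreserving exp volume μ₊ := by
  refine ⟨measurable_exp, Measure.AbsolutelyContinuous.mk fun N hN hN0 => ?_⟩
  rw [Measure.restrict_apply hN] at hN0
  rw [Measure.map_apply measurable_exp hN]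
  have hsub : exp ⁻¹' N ⊆ log '' (N ∩ Ioi 0) := fun x hx => ⟨exp x, ⟨hx, exp_pos x⟩, log_exp x⟩
  exact measure_mono_null hsub <| addHaar_image_eq_zero_of_differentiableOn_of_addHaar_eq_zero
    volume (differentiableOn_log.mono fun x hx => hx.2.ne') hN0

theorem integral_Ioi_zero_eq_integral_exp_smul {E : Type*} [NormedAddCommGroup E]
    [NormedSpace ℝ E] (F : ℝ → E) : ∫ s in Ioi 0, F s = ∫ y, exp y • F (exp y) := by
  have h := integral_image_eq_integral_abs_deriv_smul MeasurableSet.univ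
    (fun y _ => (hasDerivAt_exp y).hasDerivWithinAt) exp_injective.injOn F
  rw [image_univ, range_exp, Measure.restrict_univ] at h
  simp_rw [h, abs_of_pos (exp_pos _)]

theorem exp_half_mul_exp_half_div_exp_add_exp (x y : ℝ) :
    exp (x / 2) * exp (y / 2) / (exp x + exp y) = (2 * cosh ((x - y) / 2))⁻¹ := by
  have hsum : exp x + exp y = exp (x / 2) * exp (y / 2) * (2 * cosh ((x - y) / 2)) := by
    rw [cosh_eq, mul_div_cancel₀ _ two_ne_zero, mul_add, ← exp_add, ← exp_add, ← exp_add]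
    ring_nf
  rw [hsum, div_mul_cancel_left₀ (by positivity)]

theorem memLp_two_inv_add_Ioi {t : ℝ} (ht : 0 < t) :
    MemLp (fun s : ℝ => ((t + s : ℝ) : ℂ)⁻¹) 2 μ₊ := by
  refine (memLp_two_iff_integrable_sq_norm (by fun_prop)).mpr ?_
  refine (integrableOn_add_rpow_Ioi_of_lt (a := -2) (m := t) (by norm_num) (by linarith)).congr_fun
    (fun s hs => ?_) measurableSet_Ioi
  have hts : 0 < s + t := by linarith [mem_Ioi.mp hs]
  dsimp only
  rw [norm_inv, Complex.norm_real, norm_of_nonneg (by linarith), inv_pow, add_comm t s,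
    rpow_neg hts.le, rpow_two]

theorem integral_cexp_neg_mul_Ioi_zero {a : ℂ} (ha : 0 < a.re) :
    ∫ x : ℝ in Ioi 0, Complex.exp (-a * x) = a⁻¹ := by
  have h := integral_exp_mul_complex_Ioi (a := -a) (by simpa using ha) 0
  rwa [Complex.ofReal_zero, mul_zero, Complex.exp_zero, neg_div_neg_eq, one_div] at h

theorem integral_exp_neg_mul_Ioi_zero {a : ℝ} (ha : 0 < a) :
    ∫ x : ℝ in Ioi 0, exp (-a * x) = a⁻¹ := by
  have h := integral_exp_mul_Ioi (a := -a) (by linarith) 0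
  rwa [mul_zero, exp_zero, neg_div_neg_eq, one_div] at h

theorem integral_laplace_laplace_eq_carleman {g : ℝ → ℂ} {t : ℝ} (ht : 0 ≤ t)
    (hg : IntegrableOn (fun s => ((t + s : ℝ) : ℂ)⁻¹ * g s) (Ioi 0)) :
    ∫ x in Ioi (0 : ℝ), Complex.exp (-(x * t)) * ∫ s in Ioi (0 : ℝ), Complex.exp (-(s * x)) * g s
      = ∫ s in Ioi (0 : ℝ), ((t + s : ℝ) : ℂ)⁻¹ * g s := by
  have hpos : ∀ᵐ s ∂μ₊, 0 < t + s := by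
    filter_upwards [ae_restrict_mem measurableSet_Ioi] with s hs
    linarith [mem_Ioi.mp hs]
  have hg_meas : AEStronglyMeasurable g μ₊ := by
    refine ((by fun_prop : Continuous fun s : ℝ => ((t + s : ℝ) : ℂ)).aestronglyMeasurable.mul
      hg.aestronglyMeasurable).congr ?_
    filter_upwards [hpos] with s hs
    exact mul_inv_cancel_left₀ (Complex.ofReal_ne_zero.mpr hs.ne') (g s)
  set F : ℝ × ℝ → ℂ := fun p => Complex.exp (-((t + p.2 : ℝ) : ℂ) * p.1) * g p.2
  have hF_meas : AEStronglyMeasurable F (μ₊.prod μ₊) :=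
    (by fun_prop : Continuous fun p : ℝ × ℝ => Complex.exp (-((t + p.2 : ℝ) : ℂ) * p.1))
      |>.aestronglyMeasurable.mul (hg_meas.comp_quasiMeasurePreserving
        Measure.quasiMeasurePreserving_snd)
  have hF_int : Integrable F (μ₊.prod μ₊) := by
    rw [integrable_prod_iff' hF_meas]
    refine ⟨?_, hg.norm.congr ?_⟩
    · filter_upwards [hpos] with s hs
      exact (integrableOn_exp_mul_complex_Ioi (a := -((t + s : ℝ) : ℂ))
        (by rw [Complex.neg_re, Complex.ofReal_re]; linarith) 0
        |>.mul_const (g s))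
    · filter_upwards [hpos] with s hs
      have hnorm : ∀ x, ‖F (x, s)‖ = exp (-(t + s) * x) * ‖g s‖ := fun x => by
        rw [norm_mul, Complex.norm_exp, ← Complex.ofReal_neg, ← Complex.ofReal_mul,
          Complex.ofReal_re]
      simp only [hnorm, integral_mul_const, integral_exp_neg_mul_Ioi_zero hs, norm_mul, norm_inv,
        Complex.norm_real, norm_of_nonneg hs.le]
  calc _ = ∫ x in Ioi (0 : ℝ), ∫ s in Ioi (0 : ℝ), F (x, s) := by
        refine integral_congr_ae (Filter.Eventually.of_forall fun x => ?_)
        simp only [F, ← integral_const_mul, ← mul_assoc, ← Complex.exp_add]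
        push_cast
        ring_nf
    _ = ∫ s in Ioi (0 : ℝ), ∫ x in Ioi (0 : ℝ), F (x, s) := integral_integral_swap hF_int
    _ = _ := by
        refine integral_congr_ae ?_
        filter_upwards [hpos] with s hs
        simp only [F]
        rw [integral_mul_const, integral_cexp_neg_mul_Ioi_zero (by simpa using hs)]

theorem laplace_laplace_ae_eq_carleman (L : Lp ℂ 2 μ₊ → Lp ℂ 2 μ₊)
    (hL : ∀ f : Lp ℂ 2 μ₊,
      (L f : ℝ → ℂ) =ᵐ[μ₊] fun t => ∫ x in Ioi (0 : ℝ), Complex.exp (-(x * t)) * f x)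
    (g : Lp ℂ 2 μ₊) :
    (L (L g) : ℝ → ℂ) =ᵐ[μ₊] fun t => ∫ s in Ioi (0 : ℝ), ((t + s : ℝ) : ℂ)⁻¹ * g s := by
  filter_upwards [hL (L g), ae_restrict_mem measurableSet_Ioi] with t hLLg ht
  rw [hLLg, ← integral_laplace_laplace_eq_carleman ht.le
    ((memLp_two_inv_add_Ioi ht).integrable_mul (Lp.memLp g))]
  exact integral_congr_ae ((hL g).mono fun x hx => by simp only [hx])

theorem exp_half_mul_integral_inv_exp_add (g : ℝ → ℂ) (x : ℝ) :
    ((exp (x / 2) : ℝ) : ℂ) * ∫ s in Ioi (0 : ℝ), ((exp x + s : ℝ) : ℂ)⁻¹ * g s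
      = ∫ y, (((2 * cosh ((x - y) / 2))⁻¹ : ℝ) : ℂ) * (((exp (y / 2) : ℝ) : ℂ) * g (exp y)) := by
  rw [integral_Ioi_zero_eq_integral_exp_smul, ← integral_const_mul]
  congr 1
  ext y
  rw [← exp_half_mul_exp_half_div_exp_add_exp, Complex.real_smul,
    show exp y = exp (y / 2) * exp (y / 2) by rw [← exp_add, add_halves]]
  push_cast
  ring

/-- Formula (3.5) of Frank–Pushnitski, *The spectral density of a product of spectral
projections*:  if `ℒ` is the Laplace transform on `L²(ℝ₊)` (so that `ℒ²` is the Carleman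
operator, the integral operator with kernel `1/(t+s)`), `U : L²(ℝ₊) → L²(ℝ)` is the unitary
operator `(Uf)(x) = e^{x/2} f(eˣ)`, and `B` is the operator of convolution with
`x ↦ 1/(2 cosh(x/2))` on `L²(ℝ)`, then `U ℒ² U⁻¹ = B`. -/
theorem statement8
    (L : Lp ℂ 2 (volume.restrict (Set.Ioi (0:ℝ))) →L[ℂ]
         Lp ℂ 2 (volume.restrict (Set.Ioi (0:ℝ))))
    (hL : ∀ f : Lp ℂ 2 (volume.restrict (Set.Ioi (0:ℝ))),
      (L f : ℝ → ℂ) =ᵐ[volume.restrict (Set.Ioi (0:ℝ))]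
        fun t => ∫ x in Set.Ioi (0:ℝ), Complex.exp (-(x * t)) * f x)
    (U : Lp ℂ 2 (volume.restrict (Set.Ioi (0:ℝ))) ≃ₗᵢ[ℂ] Lp ℂ 2 (volume : Measure ℝ))
    (hU : ∀ f : Lp ℂ 2 (volume.restrict (Set.Ioi (0:ℝ))),
      (U f : ℝ → ℂ) =ᵐ[(volume : Measure ℝ)]
        fun x => ((Real.exp (x / 2) : ℝ) : ℂ) * f (Real.exp x))
    (B : Lp ℂ 2 (volume : Measure ℝ) →L[ℂ] Lp ℂ 2 (volume : Measure ℝ))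
    (hB : ∀ f : Lp ℂ 2 (volume : Measure ℝ),
      (B f : ℝ → ℂ) =ᵐ[(volume : Measure ℝ)]
        fun x => ∫ y : ℝ, (((2 * Real.cosh (y / 2))⁻¹ : ℝ) : ℂ) * f (x - y)) :
    ∀ f : Lp ℂ 2 (volume : Measure ℝ), U (L (L (U.symm f))) = B f := by
  intro f
  set g := U.symm f
  have hf : (f : ℝ → ℂ) =ᵐ[volume] fun y => ((exp (y / 2) : ℝ) : ℂ) * g (exp y) := by
    simpa [g] using hU g
  apply Lp.ext
  filter_upwards [hU (L (L g)), hB f,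
    exp_quasiMeasurePreserving_Ioi.ae_eq_comp (laplace_laplace_ae_eq_carleman L hL g)]
    with x hUx hBx hLLx
  rw [Function.comp_apply, Function.comp_apply] at hLLx
  rw [hUx, hBx, hLLx, exp_half_mul_integral_inv_exp_add,
    ← integral_sub_left_eq_self (fun y => _ * f (x - y)) volume x]
  simp only [sub_sub_cancel]
  exact integral_congr_ae (hf.mono fun y hy => by simp only [hy])
end

section
/- For every a with 0 ≤ a ≤ 1, (1/2π) ∫_{-∞}^{∞} ln( 1 − a² / cosh²(πx) ) dx = −(1/π²) arcsin²(a). -/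
/-!
After the substitution `x ↦ π x` the claim is `F a = -2 arcsin² a` for
`F a = ∫ log (1 - a² / cosh² x) dx`. For `|a| < 1` one may differentiate under the integral sign:
`F' a = -∫ 2a / (cosh² x - a²) dx`, and `x ↦ -(2/c) arctan ((a/c) tanh x)` with `c = √(1 - a²)` is
a primitive of the integrand, so `F' a = -4 arcsin a / √(1 - a²)`, the derivative of
`-2 arcsin² a`; both sides vanish at `a = 0`. The boundary case `|a| = 1`, where the integrand has a
logarithmic singularity at `x = 0`, follows by monotone convergence.
-/

open scoped Real
open MeasureTheory Filter Set Topology Real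

theorem Real.tanh_eq_one_sub_exp_div (x : ℝ) :
    tanh x = (1 - exp (-2 * x)) / (1 + exp (-2 * x)) := by
  have h : exp (-2 * x) = exp (-x) ^ 2 := by rw [← exp_nat_mul]; ring_nf
  have h2 : exp x * exp (-x) = 1 := by rw [← exp_add, add_neg_cancel, exp_zero]
  rw [tanh_eq_sinh_div_cosh, sinh_eq, cosh_eq, h]
  field_simp
  linear_combination 2 * exp (-x) * h2

theorem Real.tendsto_tanh_atTop : Tendsto tanh atTop (𝓝 1) := by
  have h : Tendsto (fun x : ℝ => exp (-2 * x)) atTop (𝓝 0) :=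
    tendsto_exp_atBot.comp (tendsto_id.const_mul_atTop_of_neg (by norm_num))
  have := ((tendsto_const_nhds (x := (1 : ℝ))).sub h).div
    ((tendsto_const_nhds (x := (1 : ℝ))).add h) (by norm_num)
  rw [sub_zero, add_zero, div_one] at this
  rwa [funext tanh_eq_one_sub_exp_div]

theorem Real.tendsto_tanh_atBot : Tendsto tanh atBot (𝓝 (-1)) := by
  simpa [Function.comp_def] using (tendsto_tanh_atTop.comp tendsto_neg_atBot_atTop).neg

theorem Real.hasDerivAt_tanh (x : ℝ) : HasDerivAt tanh (cosh x ^ 2)⁻¹ x := by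
  rw [show tanh = sinh / cosh from funext tanh_eq_sinh_div_cosh]
  refine ((hasDerivAt_sinh x).div (hasDerivAt_cosh x) (cosh_pos x).ne').congr_deriv ?_
  rw [← sq, ← sq, cosh_sq_sub_sinh_sq, one_div]

theorem MeasureTheory.integrable_deriv_of_nonneg {g g' : ℝ → ℝ} {m n : ℝ}
    (hderiv : ∀ x, HasDerivAt g (g' x) x) (hg' : ∀ x, 0 ≤ g' x)
    (hbot : Tendsto g atBot (𝓝 m)) (htop : Tendsto g atTop (𝓝 n)) : Integrable g' := by
  have hIoi : IntegrableOn g' (Ioi 0) :=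
    integrableOn_Ioi_deriv_of_nonneg' (fun x _ => hderiv x) (fun x _ => hg' x) htop
  have hIio : IntegrableOn g' (Iio 0) := by
    have hderiv' : ∀ x, HasDerivAt (fun x => -g (-x)) (g' (-x)) x := fun x =>
      ((hderiv (-x)).comp x (hasDerivAt_neg x)).neg.congr_deriv (by ring)
    have htop' : Tendsto (fun x => -g (-x)) atTop (𝓝 (-m)) :=
      (hbot.comp tendsto_neg_atTop_atBot).neg
    simpa using (integrableOn_Ioi_deriv_of_nonneg' (a := -0) (fun x _ => hderiv' x)
      (fun x _ => hg' (-x)) htop').comp_neg_Iio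
  rw [← integrableOn_univ, ← Iio_union_Ici (a := (0 : ℝ))]
  exact hIio.union ((integrableOn_Ici_iff_integrableOn_Ioi).2 hIoi)

/-- Monotone convergence, in a form that needs no integrability of the limit. -/
theorem MeasureTheory.integral_eq_of_tendsto_integral_of_monotone {α : Type*}
    [MeasurableSpace α] {μ : Measure α} {f : ℕ → α → ℝ} {F : α → ℝ} {L : ℝ}
    (hf : ∀ n, Integrable (f n) μ) (hf_nonneg : 0 ≤ᵐ[μ] f 0)
    (h_mono : ∀ᵐ x ∂μ, Monotone fun n => f n x)
    (h_tendsto : ∀ᵐ x ∂μ, Tendsto (fun n => f n x) atTop (𝓝 (F x)))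
    (h_int : Tendsto (fun n => ∫ x, f n x ∂μ) atTop (𝓝 L)) : ∫ x, F x ∂μ = L := by
  have hf_nonneg' : ∀ n, 0 ≤ᵐ[μ] f n := fun n => by
    filter_upwards [hf_nonneg, h_mono] with x h0 hx using h0.trans (hx (Nat.zero_le n))
  have hF_nonneg : 0 ≤ᵐ[μ] F := by
    filter_upwards [hf_nonneg, h_mono, h_tendsto] with x h0 hx hlim
    exact h0.trans (ge_of_tendsto' hlim fun n => hx (Nat.zero_le n))
  have hL : 0 ≤ L := ge_of_tendsto' h_int fun n => integral_nonneg_of_ae (hf_nonneg' n)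
  have hlint : Tendsto (fun n => ∫⁻ x, ENNReal.ofReal (f n x) ∂μ) atTop
      (𝓝 (∫⁻ x, ENNReal.ofReal (F x) ∂μ)) :=
    lintegral_tendsto_of_tendsto_of_monotone (fun n => (hf n).aemeasurable.ennreal_ofReal)
      (by filter_upwards [h_mono] with x hx n m hnm using ENNReal.ofReal_le_ofReal (hx hnm))
      (by filter_upwards [h_tendsto] with x hx using
        (ENNReal.continuous_ofReal.tendsto _).comp hx)
  have hlint' : Tendsto (fun n => ∫⁻ x, ENNReal.ofReal (f n x) ∂μ) atTop
      (𝓝 (ENNReal.ofReal L)) := by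
    simp_rw [← ofReal_integral_eq_lintegral_ofReal (hf _) (hf_nonneg' _)]
    exact (ENNReal.continuous_ofReal.tendsto L).comp h_int
  rw [integral_eq_lintegral_of_nonneg_ae hF_nonneg
      (aestronglyMeasurable_of_tendsto_ae atTop (fun n => (hf n).1) h_tendsto),
    tendsto_nhds_unique hlint hlint', ENNReal.toReal_ofReal hL]

theorem one_le_cosh_sq (x : ℝ) : 1 ≤ cosh x ^ 2 := one_le_pow₀ (one_le_cosh x)

theorem integrable_inv_cosh_sq : Integrable fun x => (cosh x ^ 2)⁻¹ :=
  integrable_deriv_of_nonneg hasDerivAt_tanh (fun x => by positivity) tendsto_tanh_atBot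
    tendsto_tanh_atTop

theorem one_sub_sq_div_pos {a c : ℝ} (h : a ^ 2 < c) : 0 < 1 - a ^ 2 / c :=
  sub_pos.2 ((div_lt_one ((sq_nonneg a).trans_lt h)).2 h)

theorem abs_two_mul_div_sub_sq_le {a r c : ℝ} (ha : |a| ≤ r) (hr : r < 1) (hc : 1 ≤ c) :
    |2 * a / (c - a ^ 2)| ≤ 2 * r / (1 - r ^ 2) * c⁻¹ := by
  have hr0 : 0 ≤ r := (abs_nonneg a).trans ha
  have har : a ^ 2 ≤ r ^ 2 := sq_le_sq' (abs_le.1 ha).1 (abs_le.1 ha).2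
  have hr2 : r ^ 2 < 1 := by nlinarith
  have hden : (1 - r ^ 2) * c ≤ c - a ^ 2 := by nlinarith
  have hpos : 0 < (1 - r ^ 2) * c := by nlinarith
  calc |2 * a / (c - a ^ 2)| = 2 * |a| / (c - a ^ 2) := by
        rw [abs_div, abs_mul, abs_two, abs_of_pos (hpos.trans_le hden)]
    _ ≤ 2 * r / ((1 - r ^ 2) * c) := by gcongr
    _ = 2 * r / (1 - r ^ 2) * c⁻¹ := by field_simp

theorem abs_log_one_sub_sq_div_le {a c : ℝ} (ha : |a| < 1) (hc : 1 ≤ c) :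
    |log (1 - a ^ 2 / c)| ≤ a ^ 2 / (1 - a ^ 2) * c⁻¹ := by
  have ha2 : a ^ 2 < 1 := (sq_lt_one_iff_abs_lt_one a).2 ha
  have hy0 : 0 < 1 - a ^ 2 / c := one_sub_sq_div_pos (ha2.trans_le hc)
  have hy1 : 1 - a ^ 2 / c ≤ 1 := sub_le_self _ (by positivity)
  rw [abs_of_nonpos (log_nonpos hy0.le hy1)]
  calc -log (1 - a ^ 2 / c) ≤ (1 - a ^ 2 / c)⁻¹ - 1 := by
        linarith [one_sub_inv_le_log_of_pos hy0]
    _ = a ^ 2 / (c - a ^ 2) := by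
        have : c - a ^ 2 ≠ 0 := by linarith
        field_simp
        ring
    _ ≤ a ^ 2 / ((1 - a ^ 2) * c) := by gcongr; nlinarith
    _ = a ^ 2 / (1 - a ^ 2) * c⁻¹ := by field_simp

theorem hasDerivAt_log_one_sub_sq_div {a c : ℝ} (h : a ^ 2 < c) :
    HasDerivAt (fun b => log (1 - b ^ 2 / c)) (-(2 * a) / (c - a ^ 2)) a := by
  have hc : 0 < c := (sq_nonneg a).trans_lt h
  refine (((hasDerivAt_pow 2 a).div_const c).const_sub 1).log (one_sub_sq_div_pos h).ne'
    |>.congr_deriv ?_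
  field_simp
  ring

theorem integrable_div_cosh_sq_sub_sq {a : ℝ} (ha : |a| < 1) :
    Integrable fun x => -(2 * a) / (cosh x ^ 2 - a ^ 2) := by
  refine (integrable_inv_cosh_sq.const_mul (2 * |a| / (1 - |a| ^ 2))).mono'
    (Measurable.aestronglyMeasurable (by fun_prop)) (Eventually.of_forall fun x => ?_)
  rw [Real.norm_eq_abs, neg_div, abs_neg]
  exact abs_two_mul_div_sub_sq_le le_rfl ha (one_le_cosh_sq x)

theorem integral_div_cosh_sq_sub_sq {a : ℝ} (ha : |a| < 1) :
    ∫ x, -(2 * a) / (cosh x ^ 2 - a ^ 2) = -4 * arcsin a / √(1 - a ^ 2) := by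
  have ha2 : a ^ 2 < 1 := (sq_lt_one_iff_abs_lt_one a).2 ha
  set c := √(1 - a ^ 2)
  have hc : 0 < c := sqrt_pos.2 (by linarith)
  have hc2 : c ^ 2 = 1 - a ^ 2 := sq_sqrt (by linarith)
  set G : ℝ → ℝ := fun x => -(2 / c) * arctan (a / c * tanh x)
  have hG : ∀ x, HasDerivAt G (-(2 * a) / (cosh x ^ 2 - a ^ 2)) x := fun x => by
    refine (((hasDerivAt_tanh x).const_mul (a / c)).arctan.const_mul (-(2 / c))).congr_deriv ?_
    have hC := one_le_cosh_sq x
    have hS : sinh x ^ 2 = cosh x ^ 2 - 1 := by linarith [cosh_sq_sub_sinh_sq x]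
    have : cosh x ^ 2 - a ^ 2 ≠ 0 := by nlinarith
    rw [tanh_eq_sinh_div_cosh]
    field_simp
    linear_combination (a * cosh x ^ 2) * hc2 + a ^ 3 * hS
  have hlim : ∀ {l : Filter ℝ} {y : ℝ}, Tendsto tanh l (𝓝 y) →
      Tendsto G l (𝓝 (-(2 / c) * arctan (a / c * y))) := fun h =>
    ((continuous_arctan.tendsto _).comp (h.const_mul (a / c))).const_mul _
  rw [integral_of_hasDerivAt_of_tendsto hG (integrable_div_cosh_sq_sub_sq ha)
    (hlim tendsto_tanh_atBot) (hlim tendsto_tanh_atTop),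
    arcsin_eq_arctan (abs_lt.1 ha), mul_neg_one, arctan_neg, mul_one]
  ring

theorem integrable_log_one_sub_sq_div_cosh_sq {a : ℝ} (ha : |a| < 1) :
    Integrable fun x => log (1 - a ^ 2 / cosh x ^ 2) :=
  (integrable_inv_cosh_sq.const_mul _).mono' (Measurable.aestronglyMeasurable (by fun_prop))
    (Eventually.of_forall fun x => abs_log_one_sub_sq_div_le ha (one_le_cosh_sq x))

theorem hasDerivAt_integral_log_one_sub_sq_div_cosh_sq {a : ℝ} (ha : |a| < 1) :
    HasDerivAt (fun b => ∫ x, log (1 - b ^ 2 / cosh x ^ 2))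
      (-4 * arcsin a / √(1 - a ^ 2)) a := by
  obtain ⟨r, hr, hr1⟩ := exists_between ha
  have hball : ∀ b ∈ Metric.ball a (r - |a|), |b| ≤ r := fun b hb => by
    rw [Metric.mem_ball, Real.dist_eq] at hb
    linarith [abs_sub_abs_le_abs_sub b a]
  obtain ⟨-, h⟩ := hasDerivAt_integral_of_dominated_loc_of_deriv_le
    (F' := fun b x => -(2 * b) / (cosh x ^ 2 - b ^ 2))
    (Metric.ball_mem_nhds a (sub_pos.2 hr))
    (Eventually.of_forall fun b => Measurable.aestronglyMeasurable (by fun_prop))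
    (integrable_log_one_sub_sq_div_cosh_sq ha) (integrable_div_cosh_sq_sub_sq ha).1
    (Eventually.of_forall fun x b hb => by
      rw [Real.norm_eq_abs, neg_div, abs_neg]
      exact abs_two_mul_div_sub_sq_le (hball b hb) hr1 (one_le_cosh_sq x))
    (integrable_inv_cosh_sq.const_mul _)
    (Eventually.of_forall fun x b hb => hasDerivAt_log_one_sub_sq_div (by
      nlinarith [sq_abs b, hball b hb, abs_nonneg b, one_le_cosh_sq x]))
  rwa [integral_div_cosh_sq_sub_sq ha] at h

theorem hasDerivAt_arcsin_sq {a : ℝ} (ha : |a| < 1) :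
    HasDerivAt (fun b => arcsin b ^ 2) (2 * arcsin a / √(1 - a ^ 2)) a := by
  obtain ⟨h₁, h₂⟩ := abs_lt.1 ha
  refine ((hasDerivAt_arcsin h₁.ne' h₂.ne).pow 2).congr_deriv ?_
  ring

theorem integral_log_one_sub_sq_div_cosh_sq_of_abs_lt {a : ℝ} (ha : |a| < 1) :
    ∫ x, log (1 - a ^ 2 / cosh x ^ 2) = -2 * arcsin a ^ 2 := by
  have hF : ∀ b ∈ Ioo (-1 : ℝ) 1, HasDerivAt (fun b => ∫ x, log (1 - b ^ 2 / cosh x ^ 2))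
      (-4 * arcsin b / √(1 - b ^ 2)) b := fun b hb =>
    hasDerivAt_integral_log_one_sub_sq_div_cosh_sq (abs_lt.2 hb)
  have hG : ∀ b ∈ Ioo (-1 : ℝ) 1, HasDerivAt (fun b => -2 * arcsin b ^ 2)
      (-4 * arcsin b / √(1 - b ^ 2)) b := fun b hb =>
    ((hasDerivAt_arcsin_sq (abs_lt.2 hb)).const_mul (-2)).congr_deriv (by ring)
  exact isOpen_Ioo.eqOn_of_deriv_eq isPreconnected_Ioo
    (fun b hb => (hF b hb).differentiableAt.differentiableWithinAt)
    (fun b hb => (hG b hb).differentiableAt.differentiableWithinAt)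
    (fun b hb => (hF b hb).deriv.trans (hG b hb).deriv.symm)
    (by norm_num : (0 : ℝ) ∈ Ioo (-1) 1) (by simp) (abs_lt.1 ha)

theorem integral_log_one_sub_sq_div_cosh_sq {a : ℝ} (ha : |a| ≤ 1) :
    ∫ x, log (1 - a ^ 2 / cosh x ^ 2) = -2 * arcsin a ^ 2 := by
  obtain ⟨u, hu_mono, hu_mem, hu_lim⟩ := exists_seq_strictMono_tendsto' (zero_lt_one' ℝ)
  have hua : ∀ n, |u n * a| < 1 := fun n => by
    rw [abs_mul, abs_of_pos (hu_mem n).1]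
    exact (mul_le_of_le_one_right (hu_mem n).1.le ha).trans_lt (hu_mem n).2
  have hua2 : ∀ n x, (u n * a) ^ 2 < cosh x ^ 2 := fun n x =>
    ((sq_lt_one_iff_abs_lt_one _).2 (hua n)).trans_le (one_le_cosh_sq x)
  have hua_lim : Tendsto (fun n => u n * a) atTop (𝓝 a) := by simpa using hu_lim.mul_const a
  have hmono : ∀ x, Monotone fun n => -log (1 - (u n * a) ^ 2 / cosh x ^ 2) := fun x n m hnm => by
    have : (u n * a) ^ 2 ≤ (u m * a) ^ 2 := by
      rw [mul_pow, mul_pow]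
      gcongr
      · exact (hu_mem n).1.le
      · exact hu_mono.monotone hnm
    exact neg_le_neg (log_le_log (one_sub_sq_div_pos (hua2 m x)) (by gcongr))
  have hconv : ∀ x ≠ 0,
      Tendsto (fun n => -log (1 - (u n * a) ^ 2 / cosh x ^ 2)) atTop
        (𝓝 (-log (1 - a ^ 2 / cosh x ^ 2))) := fun x hx => by
    have hC : a ^ 2 < cosh x ^ 2 := by
      have := one_lt_pow₀ (one_lt_cosh.2 hx) two_ne_zero
      nlinarith [(sq_le_one_iff_abs_le_one a).2 ha]
    have : ContinuousAt (fun b => -log (1 - b ^ 2 / cosh x ^ 2)) a := by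
      fun_prop (disch := exact (one_sub_sq_div_pos hC).ne')
    exact this.tendsto.comp hua_lim
  have hint : Tendsto (fun n => ∫ x, -log (1 - (u n * a) ^ 2 / cosh x ^ 2)) atTop
      (𝓝 (2 * arcsin a ^ 2)) := by
    simp_rw [integral_neg, integral_log_one_sub_sq_div_cosh_sq_of_abs_lt (hua _), neg_mul,
      neg_neg]
    exact (((continuous_arcsin.tendsto a).comp hua_lim).pow 2).const_mul 2
  have key := integral_eq_of_tendsto_integral_of_monotone
    (fun n => (integrable_log_one_sub_sq_div_cosh_sq (hua n)).neg)
    (Eventually.of_forall fun x => neg_nonneg.2 <|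
      log_nonpos (one_sub_sq_div_pos (hua2 0 x)).le (sub_le_self _ (by positivity)))
    (Eventually.of_forall hmono) ((Measure.ae_ne volume 0).mono hconv) hint
  rw [integral_neg] at key
  linarith

/-- The integral computation in the Remark after Corollary 2 of Frank–Pushnitski,
*The spectral density of a product of spectral projections*:  for `0 ≤ a ≤ 1`,
`(2π)⁻¹ ∫_ℝ ln(1 - a²/cosh²(πx)) dx = -π⁻² arcsin²(a)`. -/
theorem statement14 (a : ℝ) (ha0 : 0 ≤ a) (ha1 : a ≤ 1) :
    (1 / (2 * π)) * ∫ x : ℝ, Real.log (1 - a ^ 2 / Real.cosh (π * x) ^ 2) =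
      -(1 / π ^ 2) * Real.arcsin a ^ 2 := by
  rw [Measure.integral_comp_mul_left (fun x => log (1 - a ^ 2 / cosh x ^ 2)) π,
    integral_log_one_sub_sq_div_cosh_sq (abs_le.2 ⟨by linarith, ha1⟩),
    abs_of_pos (inv_pos.2 pi_pos), smul_eq_mul]
  field_simp
end

section
/- Under Assumptions 1 and 2, for every 0 < ε ≤ δ the factorization 1_{(ε,δ)}(H) 1_{(-δ,-ε)}(H₀) = 𝒵_ε (𝒵_ε^{(0)})* holds. -/
/- Preliminaries: trace and Schatten classes of operators on a complex Hilbert space. -/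

open MeasureTheory Filter Topology Set ENNReal ContinuousLinearMap Complex

noncomputable section

namespace SpectralDensity

variable (E : Type*) [NormedAddCommGroup E] [InnerProductSpace ℂ E] [CompleteSpace E]

/-- The index set of a fixed Hilbert basis of `E`. -/
def hbIndex : Set E := (exists_hilbertBasis ℂ E).choose

/-- A fixed Hilbert basis of `E`. -/
def hb : HilbertBasis (hbIndex E) ℂ E := (exists_hilbertBasis ℂ E).choose_spec.choose

variable {E}

/-- The trace, with values in `ℝ≥0∞`; for a non-negative operator this is its trace. -/
def traceENN (T : E →L[ℂ] E) : ℝ≥0∞ :=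
  ∑' i : hbIndex E, (‖inner (𝕜 := ℂ) (hb E i) (T (hb E i))‖₊ : ℝ≥0∞)

/-- The real trace; for a self-adjoint trace class operator this is its trace. -/
def traceR (T : E →L[ℂ] E) : ℝ :=
  ∑' i : hbIndex E, Complex.re (inner (𝕜 := ℂ) (hb E i) (T (hb E i)))

variable {F : Type*} [NormedAddCommGroup F] [InnerProductSpace ℂ F] [CompleteSpace F]

/-- `‖T‖_p ^ p`, the `p`-th power of the Schatten `p`-norm of `T`, defined as the trace of
`(T^* T)^{p/2} = |T|^p` (computed by the continuous functional calculus). -/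
def snormPow (p : ℝ) (T : E →L[ℂ] F) : ℝ≥0∞ :=
  traceENN (cfc (fun x : ℝ => x ^ (p / 2)) (ContinuousLinearMap.adjoint T ∘L T))

/-- Membership in the Schatten class `𝐒_p`. -/
def MemSchatten (p : ℝ) (T : E →L[ℂ] F) : Prop := snormPow p T ≠ ∞

end SpectralDensity

/- Preliminaries: an abstract self-adjoint operator, encoded through its bounded Borel
functional calculus, and the objects `F₀(λ)`, `F(λ)`, `Π_ε^{(1)}(λ)`, `Π_ε^{(2)}(λ)`
of Frank–Pushnitski, "The spectral density of a product of spectral projections". -/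

namespace SpectralDensity

/-- A function `ℝ → ℂ` that is Borel measurable and bounded. -/
def Good (f : ℝ → ℂ) : Prop := Measurable f ∧ ∃ C, ∀ x, ‖f x‖ ≤ C

/-- The bounded Borel functional calculus of a self-adjoint operator on `E`: an abstract
substitute for a (possibly unbounded) self-adjoint operator, given by the map `f ↦ f(H)` on
bounded Borel functions.  It is a unital `⋆`-homomorphism, contractive, and continuous in the
strong operator topology under bounded pointwise convergence; these properties characterise
the Borel functional calculi of self-adjoint operators. -/
structure BorelCalculus (E : Type*) [NormedAddCommGroup E] [InnerProductSpace ℂ E]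
    [CompleteSpace E] where
  Φ : (ℝ → ℂ) → E →L[ℂ] E
  map_one : Φ (fun _ => 1) = 1
  map_add : ∀ f g, Good f → Good g → Φ (f + g) = Φ f + Φ g
  map_smul : ∀ (c : ℂ) f, Good f → Φ (c • f) = c • Φ f
  map_mul : ∀ f g, Good f → Good g → Φ (f * g) = Φ f ∘L Φ g
  map_star : ∀ f, Good f →
    Φ (fun x => starRingEnd ℂ (f x)) = ContinuousLinearMap.adjoint (Φ f)
  norm_le : ∀ f (C : ℝ), Measurable f → (∀ x, ‖f x‖ ≤ C) → ‖Φ f‖ ≤ C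
  tendsto_of_bounded : ∀ (f : ℕ → ℝ → ℂ) (g : ℝ → ℂ) (C : ℝ),
    (∀ n, Measurable (f n)) → Measurable g → (∀ n x, ‖f n x‖ ≤ C) →
    (∀ x, Tendsto (fun n => f n x) atTop (𝓝 (g x))) →
    ∀ v : E, Tendsto (fun n => Φ (f n) v) atTop (𝓝 (Φ g v))

variable {ℋ 𝒦 : Type*} [NormedAddCommGroup ℋ] [InnerProductSpace ℂ ℋ] [CompleteSpace ℋ]
  [NormedAddCommGroup 𝒦] [InnerProductSpace ℂ 𝒦] [CompleteSpace 𝒦]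

/-- The function `x ↦ (x - i)⁻¹`, whose image under the functional calculus of `H` is the
resolvent `(H - i)⁻¹`. -/
def resolventFun : ℝ → ℂ := fun x => ((x : ℂ) - Complex.I)⁻¹

/-- `H = H₀ + V` for a bounded perturbation `V`, expressed through the second resolvent
identity `(H-i)⁻¹ - (H₀-i)⁻¹ = -(H-i)⁻¹ V (H₀-i)⁻¹`; here the self-adjoint operators `H`,
`H₀` are encoded by their Borel functional calculi `C`, `C0`. -/
def IsPerturbationOf (C C0 : BorelCalculus ℋ) (V : ℋ →L[ℂ] ℋ) : Prop :=
  C.Φ resolventFun - C0.Φ resolventFun =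
    - (C.Φ resolventFun ∘L V ∘L C0.Φ resolventFun)

/-- The function `x ↦ (x + M)^{-1/2-m}`, cut off (irrelevantly, on the complement of the
spectrum) below the lower bound `c` of the spectrum; its image under the functional calculus
of `H₀` is `(H₀ + M)^{-1/2-m}`. -/
def resPowFun (c M m : ℝ) : ℝ → ℂ :=
  fun x => if c ≤ x then (((x + M) ^ (-(1/2 + m)) : ℝ) : ℂ) else 0

/-- The indicator function `1_{(-∞,λ)}`. -/
def iioFun (lam : ℝ) : ℝ → ℂ := Set.indicator (Set.Iio lam) 1

/-- The indicator function `1_{(λ,∞)}`. -/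
def ioiFun (lam : ℝ) : ℝ → ℂ := Set.indicator (Set.Ioi lam) 1

/-- The indicator function `1_{(λ,μ)}`. -/
def iooFun (lam mu : ℝ) : ℝ → ℂ := Set.indicator (Set.Ioo lam mu) 1

/-- `F₀(λ) = G 1_{(-∞,λ)}(H₀) G^*`. -/
def F₀ (C0 : BorelCalculus ℋ) (G : ℋ →L[ℂ] 𝒦) (lam : ℝ) : 𝒦 →L[ℂ] 𝒦 :=
  G ∘L C0.Φ (iioFun lam) ∘L ContinuousLinearMap.adjoint G

/-- `F(λ) = V₀ G 1_{(-∞,λ)}(H) G^* V₀`. -/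
def Fop (C : BorelCalculus ℋ) (G : ℋ →L[ℂ] 𝒦) (V₀ : 𝒦 →L[ℂ] 𝒦) (lam : ℝ) : 𝒦 →L[ℂ] 𝒦 :=
  V₀ ∘L G ∘L C.Φ (iioFun lam) ∘L ContinuousLinearMap.adjoint G ∘L V₀

/-- `Π_ε^{(1)}(λ) = 1_{(-∞,λ-ε)}(H₀) 1_{(λ+ε,∞)}(H) 1_{(-∞,λ-ε)}(H₀)`. -/
def Pi1 (C0 C : BorelCalculus ℋ) (lam ε : ℝ) : ℋ →L[ℂ] ℋ :=
  C0.Φ (iioFun (lam - ε)) ∘L C.Φ (ioiFun (lam + ε)) ∘L C0.Φ (iioFun (lam - ε))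

/-- `Π_ε^{(2)}(λ) = ψ⁻(H₀-λ) ψ⁺(H-λ) ψ⁻(H₀-λ)` for cut-off functions `ψ⁻ = psim`,
`ψ⁺ = psip`. -/
def Pi2 (C0 C : BorelCalculus ℋ) (psim psip : ℝ → ℝ) (lam : ℝ) : ℋ →L[ℂ] ℋ :=
  C0.Φ (fun x => (psim (x - lam) : ℂ)) ∘L C.Φ (fun x => (psip (x - lam) : ℂ)) ∘L
    C0.Φ (fun x => (psim (x - lam) : ℂ))

/-- `ψ⁺ = psip` is an admissible regularisation at scale `ε` of the indicator of `(0,∞)`. -/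
def IsPsiPlus (ε : ℝ) (psip : ℝ → ℝ) : Prop :=
  Continuous psip ∧ (∀ x, 0 ≤ psip x ∧ psip x ≤ 1) ∧
    (∀ x ≤ ε, psip x = 0) ∧ (∀ x, 2 * ε ≤ x → psip x = 1)

/-- `ψ⁻ = psim` is an admissible regularisation at scale `ε` of the indicator of `(-∞,0)`. -/
def IsPsiMinus (ε : ℝ) (psim : ℝ → ℝ) : Prop :=
  Continuous psim ∧ (∀ x, 0 ≤ psim x ∧ psim x ≤ 1) ∧
    (∀ x, x ≤ -(2 * ε) → psim x = 1) ∧ (∀ x, -ε ≤ x → psim x = 0)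

end SpectralDensity

namespace SpectralDensity

variable {ℋ 𝒦 : Type*} [NormedAddCommGroup ℋ] [InnerProductSpace ℂ ℋ] [CompleteSpace ℋ]
  [NormedAddCommGroup 𝒦] [InnerProductSpace ℂ 𝒦] [CompleteSpace 𝒦]

/-- `F' lam` is the derivative of `λ ↦ F λ` at `lam`, in the `𝐒_p` norm. -/
def HasSchattenDerivAt (p : ℝ) (F : ℝ → 𝒦 →L[ℂ] 𝒦) (F' : 𝒦 →L[ℂ] 𝒦) (lam : ℝ) : Prop :=
  Filter.Tendsto (fun h : ℝ => snormPow p (h⁻¹ • (F (lam + h) - F lam) - F'))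
    (nhdsWithin 0 {0}ᶜ) (nhds 0)

/-- `λ ↦ F' λ` is Hölder continuous on `[-δ,δ]` in the `𝐒_p` norm, with exponent `κ` and
constant `CH` (stated for the `p`-th powers of the `𝐒_p` norms). -/
def SchattenHolderOn (p : ℝ) (F' : ℝ → 𝒦 →L[ℂ] 𝒦) (δ κ CH : ℝ) : Prop :=
  ∀ lam ∈ Set.Icc (-δ) δ, ∀ mu ∈ Set.Icc (-δ) δ,
    snormPow p (F' lam - F' mu) ≤ ENNReal.ofReal ((CH * |lam - mu| ^ κ) ^ p)

/-- The non-negative operator `A = π² F'(0)^{1/2} F₀'(0) F'(0)^{1/2}` on `𝒦`; its non-zero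
eigenvalues are the numbers `a_ℓ² = sin²(θ_ℓ/2)` associated with the eigenvalues
`e^{iθ_ℓ}` of the scattering matrix. -/
def Aop (F₀'0 F'0 : 𝒦 →L[ℂ] 𝒦) : 𝒦 →L[ℂ] 𝒦 :=
  (Real.pi ^ 2 : ℝ) • (CFC.sqrt F'0 ∘L F₀'0 ∘L CFC.sqrt F'0)

/-- The sequence `(a ℓ)_{ℓ ∈ ℕ}` enumerates (by the squares `a ℓ ^ 2`, over those `ℓ` with
`a ℓ ≠ 0`, and counting multiplicities) the non-zero eigenvalues of `A`:  there is a family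
`e` of vectors, orthonormal on `{ℓ | a ℓ ≠ 0}`, with `A (e ℓ) = a ℓ ^ 2 • e ℓ` there, and
`A = 0` on the orthogonal complement of this family. -/
def EnumeratesSqEigenvalues (A : 𝒦 →L[ℂ] 𝒦) (a : ℕ → ℝ) : Prop :=
  (∀ ℓ, 0 ≤ a ℓ) ∧ ∃ e : ℕ → 𝒦,
    Orthonormal ℂ (fun ℓ : {ℓ : ℕ // a ℓ ≠ 0} => e (ℓ : ℕ)) ∧
    (∀ ℓ, a ℓ ≠ 0 → A (e ℓ) = (((a ℓ) ^ 2 : ℝ) : ℂ) • e ℓ) ∧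
    (∀ v : 𝒦, (∀ ℓ, a ℓ ≠ 0 → inner (𝕜 := ℂ) (e ℓ) v = 0) → A v = 0)

end SpectralDensity

namespace SpectralDensity

open MeasureTheory

variable {ℋ 𝒦 : Type*} [NormedAddCommGroup ℋ] [InnerProductSpace ℂ ℋ] [CompleteSpace ℋ]
  [NormedAddCommGroup 𝒦] [InnerProductSpace ℂ 𝒦] [CompleteSpace 𝒦]

/-- The defining formula of the operator `𝒵_ε : L²(ℝ₊,𝒦) → ℋ`,
`𝒵_ε f = ∫₀^∞ e^{-tH} 1_{(ε,δ)}(H) G^* V₀ f(t) dt`. -/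
def Zfun (C : BorelCalculus ℋ) (G : ℋ →L[ℂ] 𝒦) (V₀ : 𝒦 →L[ℂ] 𝒦) (ε δ : ℝ)
    (f : Lp 𝒦 2 (volume.restrict (Set.Ioi (0:ℝ)))) : ℋ :=
  ∫ t in Set.Ioi (0:ℝ),
    (C.Φ (fun x => Complex.exp (-(t * x)) * iooFun ε δ x))
      ((ContinuousLinearMap.adjoint G) (V₀ (f t)))

/-- The defining formula of the operator `𝒵_ε^{(0)} : L²(ℝ₊,𝒦) → ℋ`,
`𝒵_ε^{(0)} f = ∫₀^∞ e^{tH₀} 1_{(-δ,-ε)}(H₀) G^* f(t) dt`. -/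
def Z0fun (C0 : BorelCalculus ℋ) (G : ℋ →L[ℂ] 𝒦) (ε δ : ℝ)
    (f : Lp 𝒦 2 (volume.restrict (Set.Ioi (0:ℝ)))) : ℋ :=
  ∫ t in Set.Ioi (0:ℝ),
    (C0.Φ (fun x => Complex.exp (t * x) * iooFun (-δ) (-ε) x))
      ((ContinuousLinearMap.adjoint G) (f t))

/-- The kernel function `γ_ε(t) = ∫_ε^δ e^{-tλ} dλ`. -/
def gammaKer (ε δ t : ℝ) : ℝ := ∫ lam in ε..δ, Real.exp (-(t * lam))

end SpectralDensity

/-! Put `K(t) = e^{-tH} 1_{(ε,δ)}(H) e^{tH₀} 1_{(-δ,-ε)}(H₀)` for `t ≥ 0`. By the resolvent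
identity, `K'(t) = -(H K(t) - K(t) H₀) = -e^{-tH} 1_{(ε,δ)}(H) V e^{tH₀} 1_{(-δ,-ε)}(H₀)`,
and `‖K(t)‖ ≤ e^{-2εt}`, so `1_{(ε,δ)}(H) 1_{(-δ,-ε)}(H₀) = K(0)` equals
`∫₀^∞ e^{-tH} 1_{(ε,δ)}(H) G^* V₀ G e^{tH₀} 1_{(-δ,-ε)}(H₀) dt`.
Since `(𝒵_ε⁽⁰⁾)^* v` is the function `t ↦ G e^{tH₀} 1_{(-δ,-ε)}(H₀) v`, this is
`𝒵_ε (𝒵_ε⁽⁰⁾)^*`. -/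

namespace SpectralDensity

lemma Good.add {f g : ℝ → ℂ} (hf : Good f) (hg : Good g) : Good (f + g) := by
  obtain ⟨hfm, A, hA⟩ := hf
  obtain ⟨hgm, B, hB⟩ := hg
  exact ⟨hfm.add hgm, A + B, fun x => (norm_add_le _ _).trans (add_le_add (hA x) (hB x))⟩

lemma Good.const_smul {f : ℝ → ℂ} (c : ℂ) (hf : Good f) : Good (c • f) := by
  obtain ⟨hfm, A, hA⟩ := hf
  refine ⟨hfm.const_smul c, ‖c‖ * A, fun x => ?_⟩
  rw [Pi.smul_apply, norm_smul]
  exact mul_le_mul_of_nonneg_left (hA x) (norm_nonneg c)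

lemma Good.neg {f : ℝ → ℂ} (hf : Good f) : Good (-f) := by
  simpa using hf.const_smul (-1)

lemma Good.sub {f g : ℝ → ℂ} (hf : Good f) (hg : Good g) : Good (f - g) := by
  simpa [sub_eq_add_neg] using hf.add hg.neg

lemma good_resolventFun : Good resolventFun := by
  refine ⟨(Complex.measurable_ofReal.sub measurable_const).inv, 1, fun x => ?_⟩
  rw [resolventFun, norm_inv]
  refine inv_le_one_of_one_le₀ ?_
  simpa using Complex.abs_im_le_norm ((x : ℂ) - Complex.I)

section Calculus

variable {E : Type*} [NormedAddCommGroup E] [InnerProductSpace ℂ E] [CompleteSpace E]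
  (C : BorelCalculus E)

lemma BorelCalculus.map_neg {f : ℝ → ℂ} (hf : Good f) : C.Φ (-f) = -C.Φ f := by
  rw [← neg_one_smul ℂ f, C.map_smul _ _ hf, neg_one_smul]

lemma BorelCalculus.map_sub {f g : ℝ → ℂ} (hf : Good f) (hg : Good g) :
    C.Φ (f - g) = C.Φ f - C.Φ g := by
  rw [sub_eq_add_neg, C.map_add _ _ hf hg.neg, C.map_neg hg, ← sub_eq_add_neg]

lemma BorelCalculus.hasDerivAt_of_norm_sub_le {f : ℝ → ℝ → ℂ} {g : ℝ → ℂ} {t K : ℝ}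
    (hf : ∀ s, Good (f s)) (hg : Good g)
    (hK : ∀ᶠ s in 𝓝 t, ∀ x,
      ‖f s x - f t x - ((s - t : ℝ) : ℂ) * g x‖ ≤ K * (s - t) ^ 2) :
    HasDerivAt (fun s => C.Φ (f s)) (C.Φ g) t := by
  rw [hasDerivAt_iff_isLittleO]
  refine (Asymptotics.IsBigO.of_bound K ?_).trans_isLittleO
    (Asymptotics.isLittleO_pow_sub_sub t one_lt_two)
  filter_upwards [hK] with s hs
  have hrem : C.Φ (f s) - C.Φ (f t) - (s - t) • C.Φ g =
      C.Φ (f s - f t - ((s - t : ℝ) : ℂ) • g) := by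
    rw [C.map_sub ((hf s).sub (hf t)) (hg.const_smul _), C.map_sub (hf s) (hf t),
      C.map_smul _ _ hg, Complex.coe_smul]
  rw [hrem, norm_pow, Real.norm_eq_abs, Real.norm_eq_abs, sq_abs]
  refine C.norm_le _ _ (((hf s).1.sub (hf t).1).sub (hg.1.const_smul _)) fun x => ?_
  simpa only [Pi.sub_apply, Pi.smul_apply, smul_eq_mul, sq_abs] using hs x

end Calculus

def expIoo (t a b : ℝ) : ℝ → ℂ := fun x => Complex.exp (-(t * x)) * iooFun a b x

def idMulExpIoo (t a b : ℝ) : ℝ → ℂ := fun x => (x : ℂ) * expIoo t a b x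

section ExpIoo

variable {t a b x : ℝ}

lemma expIoo_of_mem (hx : x ∈ Ioo a b) : expIoo t a b x = (Real.exp (-(t * x)) : ℂ) := by
  simp [expIoo, iooFun, hx]

lemma expIoo_of_notMem (hx : x ∉ Ioo a b) : expIoo t a b x = 0 := by
  simp [expIoo, iooFun, hx]

lemma expIoo_neg : expIoo (-t) a b = fun x : ℝ => Complex.exp (t * x) * iooFun a b x := by
  ext x; simp [expIoo]

lemma expIoo_zero : expIoo 0 a b = iooFun a b := by
  ext x; simp [expIoo]

lemma measurable_expIoo : Measurable (expIoo t a b) :=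
  (Complex.measurable_exp.comp (measurable_const.mul Complex.measurable_ofReal).neg).mul
    (measurable_const.indicator measurableSet_Ioo)

lemma norm_expIoo_le {c : ℝ} (h : ∀ x ∈ Ioo a b, -(t * x) ≤ c) (x : ℝ) :
    ‖expIoo t a b x‖ ≤ Real.exp c := by
  by_cases hx : x ∈ Ioo a b
  · rw [expIoo_of_mem hx, Complex.norm_real, Real.norm_eq_abs, abs_of_pos (Real.exp_pos _)]
    exact Real.exp_le_exp.2 (h x hx)
  · simp [expIoo_of_notMem hx, (Real.exp_pos c).le]

lemma neg_mul_le_of_mem_Ioo (hx : x ∈ Ioo a b) : -(t * x) ≤ |t| * max |a| |b| :=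
  calc -(t * x) ≤ |t| * |x| := by rw [← abs_mul]; exact neg_le_abs _
    _ ≤ |t| * max |a| |b| := by gcongr; exact abs_le_max_abs_abs hx.1.le hx.2.le

lemma good_expIoo : Good (expIoo t a b) :=
  ⟨measurable_expIoo, _, norm_expIoo_le fun _ => neg_mul_le_of_mem_Ioo⟩

lemma good_idMulExpIoo : Good (idMulExpIoo t a b) := by
  refine ⟨Complex.measurable_ofReal.mul measurable_expIoo,
    max |a| |b| * Real.exp (|t| * max |a| |b|), fun x => ?_⟩
  by_cases hx : x ∈ Ioo a b
  · rw [idMulExpIoo, norm_mul, Complex.norm_real, Real.norm_eq_abs]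
    exact mul_le_mul (abs_le_max_abs_abs hx.1.le hx.2.le)
      (norm_expIoo_le (fun _ => neg_mul_le_of_mem_Ioo) x) (norm_nonneg _)
      ((abs_nonneg a).trans (le_max_left _ _))
  · simp only [idMulExpIoo, expIoo_of_notMem hx, mul_zero, norm_zero]
    exact mul_nonneg ((abs_nonneg a).trans (le_max_left _ _)) (Real.exp_pos _).le

lemma norm_expIoo_sub_sub_le {s : ℝ} (hs : |s - t| * max |a| |b| ≤ 1) (x : ℝ) :
    ‖expIoo s a b x - expIoo t a b x - ((s - t : ℝ) : ℂ) * (-idMulExpIoo t a b) x‖ ≤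
      Real.exp (|t| * max |a| |b|) * max |a| |b| ^ 2 * (s - t) ^ 2 := by
  set R := max |a| |b|
  by_cases hx : x ∈ Ioo a b
  · have hxR : |x| ≤ R := abs_le_max_abs_abs hx.1.le hx.2.le
    set y := -((s - t) * x)
    have hy : |y| ≤ 1 := by
      rw [abs_neg, abs_mul]
      exact (mul_le_mul_of_nonneg_left hxR (abs_nonneg _)).trans hs
    have hexp : expIoo s a b x - expIoo t a b x - ((s - t : ℝ) : ℂ) * (-idMulExpIoo t a b) x =
        ((Real.exp (-(t * x)) * (Real.exp y - 1 - y) : ℝ) : ℂ) := by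
      simp only [Pi.neg_apply, idMulExpIoo, expIoo_of_mem hx]
      rw [show -(s * x) = -(t * x) + y by ring, Real.exp_add]
      simp only [y]
      push_cast
      ring
    rw [hexp, Complex.norm_real, Real.norm_eq_abs, abs_mul, abs_of_pos (Real.exp_pos _)]
    calc Real.exp (-(t * x)) * |Real.exp y - 1 - y| ≤ Real.exp (|t| * R) * y ^ 2 :=
          mul_le_mul (Real.exp_le_exp.2 (neg_mul_le_of_mem_Ioo hx))
            (Real.abs_exp_sub_one_sub_id_le hy) (abs_nonneg _) (Real.exp_pos _).le
      _ ≤ Real.exp (|t| * R) * (R ^ 2 * (s - t) ^ 2) := by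
          gcongr
          rw [neg_sq, mul_pow, mul_comm, ← sq_abs x]
          gcongr
      _ = Real.exp (|t| * R) * R ^ 2 * (s - t) ^ 2 := by ring
  · simp only [Pi.neg_apply, idMulExpIoo, expIoo_of_notMem hx, mul_zero, neg_zero, sub_zero,
      norm_zero]
    positivity

variable {E : Type*} [NormedAddCommGroup E] [InnerProductSpace ℂ E] [CompleteSpace E]
  (C : BorelCalculus E)

lemma BorelCalculus.hasDerivAt_expIoo (a b t : ℝ) :
    HasDerivAt (fun s => C.Φ (expIoo s a b)) (-C.Φ (idMulExpIoo t a b)) t := by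
  rw [← C.map_neg good_idMulExpIoo]
  refine C.hasDerivAt_of_norm_sub_le (K := Real.exp (|t| * max |a| |b|) * max |a| |b| ^ 2)
    (fun _ => good_expIoo) good_idMulExpIoo.neg ?_
  have hlim : Tendsto (fun s => |s - t| * max |a| |b|) (𝓝 t) (𝓝 0) := by
    have hcont : Continuous fun s => |s - t| * max |a| |b| :=
      (continuous_sub_right t).abs.mul continuous_const
    simpa using hcont.tendsto t
  filter_upwards [hlim.eventually_le_const zero_lt_one] with s hs
  exact norm_expIoo_sub_sub_le hs

lemma BorelCalculus.continuous_expIoo (a b : ℝ) : Continuous fun s => C.Φ (expIoo s a b) :=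
  continuous_iff_continuousAt.2 fun t => (C.hasDerivAt_expIoo a b t).continuousAt

lemma BorelCalculus.adjoint_expIoo (t a b : ℝ) :
    adjoint (C.Φ (expIoo t a b)) = C.Φ (expIoo t a b) := by
  rw [← C.map_star _ good_expIoo]
  congr 1
  ext x
  by_cases hx : x ∈ Ioo a b
  · rw [expIoo_of_mem hx, Complex.conj_ofReal]
  · rw [expIoo_of_notMem hx, map_zero]

lemma BorelCalculus.norm_expIoo_le_of_nonneg (ht : 0 ≤ t) :
    ‖C.Φ (expIoo t a b)‖ ≤ Real.exp (-(t * a)) :=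
  C.norm_le _ _ measurable_expIoo
    (norm_expIoo_le fun _ hx => neg_le_neg (mul_le_mul_of_nonneg_left hx.1.le ht))

lemma BorelCalculus.norm_expIoo_neg_le (ht : 0 ≤ t) :
    ‖C.Φ (expIoo (-t) a b)‖ ≤ Real.exp (t * b) :=
  C.norm_le _ _ measurable_expIoo
    (norm_expIoo_le fun _ hx => by simpa using mul_le_mul_of_nonneg_left hx.2.le ht)

end ExpIoo

section Perturbation

variable {ℋ : Type*} [NormedAddCommGroup ℋ] [InnerProductSpace ℂ ℋ] [CompleteSpace ℋ]
  {C C0 : BorelCalculus ℋ} {W : ℋ →L[ℂ] ℋ}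

/-- Formally `f(H) V g(H₀) = (x f)(H) g(H₀) - f(H) (x g)(H₀)`: this is the resolvent identity
multiplied by `u(H)` on the left and `v(H₀)` on the right, where `u = (x - i) f` and
`v = (x - i) g`. -/
lemma IsPerturbationOf.comp_comp_eq_sub (hW : IsPerturbationOf C C0 W) {f g : ℝ → ℂ}
    (hf : Good f) (hxf : Good fun x => x * f x) (hg : Good g) (hxg : Good fun x => x * g x) :
    C.Φ f ∘L W ∘L C0.Φ g =
      C.Φ (fun x => x * f x) ∘L C0.Φ g - C.Φ f ∘L C0.Φ (fun x => x * g x) := by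
  set u : ℝ → ℂ := (fun x => x * f x) - Complex.I • f
  set v : ℝ → ℂ := (fun x => x * g x) - Complex.I • g
  have hsub : ∀ x : ℝ, (x : ℂ) - Complex.I ≠ 0 := fun x h => by
    simpa using congrArg Complex.im h
  have hfu : C.Φ f = C.Φ u ∘L C.Φ resolventFun := by
    rw [← C.map_mul _ _ (hxf.sub (hf.const_smul _)) good_resolventFun]
    congr 1; ext x
    simp only [resolventFun, Pi.mul_apply, Pi.sub_apply, Pi.smul_apply, smul_eq_mul]
    field_simp [hsub x]
  have hgv : C0.Φ g = C0.Φ resolventFun ∘L C0.Φ v := by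
    rw [← C0.map_mul _ _ good_resolventFun (hxg.sub (hg.const_smul _))]
    congr 1; ext x
    simp only [resolventFun, Pi.mul_apply, Pi.sub_apply, Pi.smul_apply, smul_eq_mul]
    field_simp [hsub x]
  have hres : C.Φ resolventFun ∘L W ∘L C0.Φ resolventFun =
      C0.Φ resolventFun - C.Φ resolventFun := by
    rw [← neg_sub, hW, neg_neg]
  have hu : C.Φ u = C.Φ (fun x => x * f x) - Complex.I • C.Φ f := by
    rw [C.map_sub hxf (hf.const_smul _), C.map_smul _ _ hf]
  have hv : C0.Φ v = C0.Φ (fun x => x * g x) - Complex.I • C0.Φ g := by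
    rw [C0.map_sub hxg (hg.const_smul _), C0.map_smul _ _ hg]
  simp only [← mul_def] at hfu hgv hres ⊢
  calc C.Φ f * (W * C0.Φ g)
      = C.Φ u * (C.Φ resolventFun * (W * C0.Φ resolventFun)) * C0.Φ v := by
        rw [hfu, hgv]; noncomm_ring
    _ = C.Φ u * C0.Φ g - C.Φ f * C0.Φ v := by
        rw [hres, hfu, hgv]; noncomm_ring
    _ = C.Φ (fun x => x * f x) * C0.Φ g - C.Φ f * C0.Φ (fun x => x * g x) := by
        rw [hu, hv, sub_mul, mul_sub, smul_mul_assoc, mul_smul_comm]; abel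

lemma IsPerturbationOf.hasDerivAt_comp_expIoo (hW : IsPerturbationOf C C0 W) (a b a' b' t : ℝ) :
    HasDerivAt (fun s => C.Φ (expIoo s a b) ∘L C0.Φ (expIoo (-s) a' b'))
      (-(C.Φ (expIoo t a b) ∘L W ∘L C0.Φ (expIoo (-t) a' b'))) t := by
  have hneg :
      HasDerivAt (fun s => C0.Φ (expIoo (-s) a' b')) (C0.Φ (idMulExpIoo (-t) a' b')) t := by
    simpa [Function.comp_def] using
      (C0.hasDerivAt_expIoo a' b' (-t)).scomp (𝕜 := ℝ) (𝕜' := ℝ) t (hasDerivAt_neg t)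
  refine ((C.hasDerivAt_expIoo a b t).mul hneg).congr_deriv ?_
  rw [hW.comp_comp_eq_sub good_expIoo good_idMulExpIoo good_expIoo good_idMulExpIoo, neg_sub,
    neg_mul]
  exact (sub_eq_neg_add _ _).symm

variable (a b a' b' : ℝ)

lemma norm_expIoo_comp_comp_le (X : ℋ →L[ℂ] ℋ) {t : ℝ} (ht : 0 ≤ t) :
    ‖C.Φ (expIoo t a b) ∘L X ∘L C0.Φ (expIoo (-t) a' b')‖ ≤ ‖X‖ * Real.exp (-(a - b') * t) :=
  calc _ ≤ ‖C.Φ (expIoo t a b)‖ * (‖X‖ * ‖C0.Φ (expIoo (-t) a' b')‖) :=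
        (opNorm_comp_le _ _).trans
          (mul_le_mul_of_nonneg_left (opNorm_comp_le _ _) (norm_nonneg _))
    _ ≤ Real.exp (-(t * a)) * (‖X‖ * Real.exp (t * b')) := by
        gcongr
        exacts [C.norm_expIoo_le_of_nonneg ht, C0.norm_expIoo_neg_le ht]
    _ = ‖X‖ * Real.exp (-(a - b') * t) := by
        rw [mul_left_comm, ← Real.exp_add]; ring_nf

variable {a b a' b'}

lemma integrableOn_expIoo_comp_comp (hgap : b' < a) :
    IntegrableOn (fun t => C.Φ (expIoo t a b) ∘L W ∘L C0.Φ (expIoo (-t) a' b')) (Ioi 0) := by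
  refine Integrable.mono' ((exp_neg_integrableOn_Ioi 0 (sub_pos.2 hgap)).const_mul ‖W‖) ?_ ?_
  · exact ((C.continuous_expIoo a b).clm_comp (continuous_const.clm_comp
      ((C0.continuous_expIoo a' b').comp continuous_neg))).aestronglyMeasurable
  · filter_upwards [ae_restrict_mem measurableSet_Ioi] with t ht
    exact norm_expIoo_comp_comp_le a b a' b' W (le_of_lt ht)

lemma tendsto_expIoo_comp_atTop (hgap : b' < a) :
    Tendsto (fun t => C.Φ (expIoo t a b) ∘L C0.Φ (expIoo (-t) a' b')) atTop (𝓝 0) := by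
  refine squeeze_zero_norm' ?_ (Real.tendsto_exp_atBot.comp
    (tendsto_id.const_mul_atTop_of_neg (neg_lt_zero.2 (sub_pos.2 hgap))))
  filter_upwards [eventually_ge_atTop 0] with t ht
  calc ‖C.Φ (expIoo t a b) ∘L C0.Φ (expIoo (-t) a' b')‖
      = ‖C.Φ (expIoo t a b) ∘L ContinuousLinearMap.id ℂ ℋ ∘L C0.Φ (expIoo (-t) a' b')‖ := by
        rw [id_comp]
    _ ≤ ‖ContinuousLinearMap.id ℂ ℋ‖ * Real.exp (-(a - b') * t) :=
        norm_expIoo_comp_comp_le a b a' b' _ ht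
    _ ≤ Real.exp (-(a - b') * t) := mul_le_of_le_one_left (Real.exp_pos _).le norm_id_le

/-- `t ↦ e^{-tH} 1_{(a,b)}(H) e^{tH₀} 1_{(a',b')}(H₀)` has minus the integrand as its
derivative, and it decays exponentially as `t → ∞` thanks to the spectral gap `b' < a`. -/
theorem IsPerturbationOf.integral_expIoo_comp_comp (hW : IsPerturbationOf C C0 W)
    (hgap : b' < a) :
    ∫ t in Ioi 0, C.Φ (expIoo t a b) ∘L W ∘L C0.Φ (expIoo (-t) a' b') =
      C.Φ (iooFun a b) ∘L C0.Φ (iooFun a' b') := by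
  have h := integral_Ioi_of_hasDerivAt_of_tendsto'
    (fun t _ => hW.hasDerivAt_comp_expIoo a b a' b' t) (integrableOn_expIoo_comp_comp hgap).neg
    (tendsto_expIoo_comp_atTop hgap)
  rwa [integral_neg, zero_sub, neg_inj, neg_zero, expIoo_zero, expIoo_zero] at h

end Perturbation

section IntegralOperator

variable {ℋ 𝒦 : Type*} [NormedAddCommGroup ℋ] [InnerProductSpace ℂ ℋ]
  [NormedAddCommGroup 𝒦] [InnerProductSpace ℂ 𝒦]
  {α : Type*} [MeasurableSpace α] {μ : Measure α} {A : α → 𝒦 →L[ℂ] ℋ}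

lemma memLp_adjoint_apply [CompleteSpace ℋ] [CompleteSpace 𝒦] (hA : MemLp A 2 μ) (v : ℋ) :
    MemLp (fun t => adjoint (A t) v) 2 μ := by
  refine hA.of_le_mul (c := ‖v‖) ?_ (Eventually.of_forall fun t => ?_)
  · exact ((adjoint.continuous.clm_apply continuous_const).comp_aestronglyMeasurable hA.1 :)
  · calc ‖adjoint (A t) v‖ ≤ ‖adjoint (A t)‖ * ‖v‖ := le_opNorm _ _
      _ = ‖v‖ * ‖A t‖ := by rw [LinearIsometryEquiv.norm_map, mul_comm]

lemma integrable_apply_of_memLp (hA : MemLp A 2 μ) (f : Lp 𝒦 2 μ) :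
    Integrable (fun t => A t (f t)) μ := by
  refine Integrable.mono' (hA.norm.integrable_mul (Lp.memLp f).norm) ?_
    (Eventually.of_forall fun t => le_opNorm _ _)
  exact isBoundedBilinearMap_apply.continuous.comp_aestronglyMeasurable
    (hA.1.prodMk (Lp.aestronglyMeasurable f))

theorem adjoint_apply_eq_toLp [CompleteSpace ℋ] [CompleteSpace 𝒦] (hA : MemLp A 2 μ)
    {Z : Lp 𝒦 2 μ →L[ℂ] ℋ} (hZ : ∀ f, Z f = ∫ t, A t (f t) ∂μ) (v : ℋ) :
    adjoint Z v = (memLp_adjoint_apply hA v).toLp _ := by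
  refine ext_inner_right ℂ fun f => ?_
  rw [adjoint_inner_left, hZ, ← integral_inner (integrable_apply_of_memLp hA f), L2.inner_def]
  refine integral_congr_ae ?_
  filter_upwards [(memLp_adjoint_apply hA v).coeFn_toLp] with t ht
  rw [ht, adjoint_inner_left]

end IntegralOperator

lemma memLp_two_exp_neg_mul_Ioi {c : ℝ} (hc : 0 < c) :
    MemLp (fun t => Real.exp (-c * t)) 2 (volume.restrict (Ioi 0)) := by
  have hcont : Continuous fun t => Real.exp (-c * t) := by fun_prop
  rw [memLp_two_iff_integrable_sq hcont.aestronglyMeasurable]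
  refine (exp_neg_integrableOn_Ioi 0 (mul_pos two_pos hc)).congr
    (Eventually.of_forall fun t => ?_)
  simp only [sq, ← Real.exp_add]
  ring_nf

lemma BorelCalculus.memLp_expIoo_neg_comp {ℋ 𝒦 : Type*} [NormedAddCommGroup ℋ]
    [InnerProductSpace ℂ ℋ] [CompleteSpace ℋ] [NormedAddCommGroup 𝒦] [InnerProductSpace ℂ 𝒦]
    (C : BorelCalculus ℋ) {a b : ℝ} (hb : b < 0) (X : 𝒦 →L[ℂ] ℋ) :
    MemLp (fun t => C.Φ (expIoo (-t) a b) ∘L X) 2 (volume.restrict (Ioi 0)) := by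
  refine (memLp_two_exp_neg_mul_Ioi (neg_pos.2 hb)).of_le_mul (c := ‖X‖) ?_ ?_
  · exact (((C.continuous_expIoo a b).comp continuous_neg).clm_comp
      continuous_const).aestronglyMeasurable
  · filter_upwards [ae_restrict_mem measurableSet_Ioi] with t ht
    calc ‖C.Φ (expIoo (-t) a b) ∘L X‖ ≤ ‖C.Φ (expIoo (-t) a b)‖ * ‖X‖ := opNorm_comp_le _ _
      _ ≤ Real.exp (t * b) * ‖X‖ := by gcongr; exact C.norm_expIoo_neg_le ht.le
      _ = ‖X‖ * ‖Real.exp (- -b * t)‖ := by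
        rw [Real.norm_of_nonneg (Real.exp_pos _).le]; ring_nf

theorem statement16_general
    {ℋ 𝒦 : Type*} [NormedAddCommGroup ℋ] [InnerProductSpace ℂ ℋ] [CompleteSpace ℋ]
    [NormedAddCommGroup 𝒦] [InnerProductSpace ℂ 𝒦] [CompleteSpace 𝒦]
    -- the self-adjoint operators `H₀` and `H`, encoded by their Borel functional calculi
    (C0 C : BorelCalculus ℋ)
    -- the perturbation `V = G^* V₀ G`
    (V₀ : 𝒦 →L[ℂ] 𝒦) (G : ℋ →L[ℂ] 𝒦)
    -- `H = H₀ + V`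
    (hHC : IsPerturbationOf C C0 (ContinuousLinearMap.adjoint G ∘L V₀ ∘L G))
    (δ : ℝ)
    (ε : ℝ) (hε : ε ∈ Set.Ioc (0:ℝ) δ)
    -- the operators 𝒵_ε and 𝒵_ε⁽⁰⁾
    (Z Z0 : Lp 𝒦 2 (volume.restrict (Set.Ioi (0:ℝ))) →L[ℂ] ℋ)
    (hZ : ∀ f, Z f = Zfun C G V₀ ε δ f)
    (hZ0 : ∀ f, Z0 f = Z0fun C0 G ε δ f) :
    C.Φ (iooFun ε δ) ∘L C0.Φ (iooFun (-δ) (-ε)) =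
      Z ∘L ContinuousLinearMap.adjoint Z0 := by
  have hgap : -ε < ε := neg_lt_self hε.1
  set A : ℝ → 𝒦 →L[ℂ] ℋ := fun t => C0.Φ (expIoo (-t) (-δ) (-ε)) ∘L adjoint G
  have hA : MemLp A 2 (volume.restrict (Ioi 0)) :=
    C0.memLp_expIoo_neg_comp (neg_neg_iff_pos.2 hε.1) (adjoint G)
  have hZ0A : ∀ f, Z0 f = ∫ t in Ioi 0, A t (f t) := fun f => by
    simp only [hZ0, Z0fun, A, comp_apply, expIoo_neg]
  rw [← hHC.integral_expIoo_comp_comp hgap]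
  ext v
  rw [comp_apply, adjoint_apply_eq_toLp hA hZ0A, hZ, Zfun,
    integral_apply (integrableOn_expIoo_comp_comp hgap)]
  refine integral_congr_ae ?_
  filter_upwards [(memLp_adjoint_apply hA v).coeFn_toLp] with t ht
  rw [ht]
  simp only [A, adjoint_comp, adjoint_adjoint, C0.adjoint_expIoo, comp_apply]
  rfl

/-- **Lemma (factorization)** of Frank–Pushnitski, *The spectral density of a product of
spectral projections* (formula (1.22)):  under Assumptions 1 and 2, for every `0 < ε ≤ δ`,
`1_{(ε,δ)}(H) 1_{(-δ,-ε)}(H₀) = 𝒵_ε (𝒵_ε⁽⁰⁾)^*`. -/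
theorem statement16
    {ℋ 𝒦 : Type*} [NormedAddCommGroup ℋ] [InnerProductSpace ℂ ℋ] [CompleteSpace ℋ]
    [TopologicalSpace.SeparableSpace ℋ]
    [NormedAddCommGroup 𝒦] [InnerProductSpace ℂ 𝒦] [CompleteSpace 𝒦]
    [TopologicalSpace.SeparableSpace 𝒦]
    -- the self-adjoint operators `H₀` and `H`, encoded by their Borel functional calculi
    (C0 C : BorelCalculus ℋ)
    -- `H₀` is lower semibounded, with lower bound `c`
    (c : ℝ) (hc : C0.Φ (iioFun c) = 0)
    -- the perturbation `V = G^* V₀ G`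
    (V₀ : 𝒦 →L[ℂ] 𝒦) (hV₀ : IsSelfAdjoint V₀) (G : ℋ →L[ℂ] 𝒦)
    -- `H = H₀ + V`
    (hHC : IsPerturbationOf C C0 (ContinuousLinearMap.adjoint G ∘L V₀ ∘L G))
    -- Assumption 1: `G (H₀+M)^{-1/2} ∈ 𝐒_∞`, `G (H₀+M)^{-1/2-m} ∈ 𝐒_{2p}`
    (p M m : ℝ) (hp : 1 ≤ p) (hM : -c < M) (hm : 0 ≤ m)
    (hcompact : IsCompactOperator ⇑(G ∘L C0.Φ (resPowFun c M 0)))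
    (hS2p : MemSchatten (2 * p) (G ∘L C0.Φ (resPowFun c M m)))
    -- Assumption 2: on `[-δ,δ]`, the derivatives `F₀'`, `F'` exist in `𝐒_p` norm and are
    -- Hölder continuous with a positive exponent
    (δ : ℝ) (hδ : 0 < δ) (F₀' F' : ℝ → 𝒦 →L[ℂ] 𝒦)
    (hd0 : ∀ lam ∈ Set.Icc (-δ) δ, HasSchattenDerivAt p (F₀ C0 G) (F₀' lam) lam)
    (hd : ∀ lam ∈ Set.Icc (-δ) δ, HasSchattenDerivAt p (Fop C G V₀) (F' lam) lam)
    (hSp0 : ∀ lam ∈ Set.Icc (-δ) δ, MemSchatten p (F₀' lam))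
    (hSp : ∀ lam ∈ Set.Icc (-δ) δ, MemSchatten p (F' lam))
    (κ CH : ℝ) (hκ : 0 < κ)
    (hHolder0 : SchattenHolderOn p F₀' δ κ CH) (hHolder : SchattenHolderOn p F' δ κ CH)
    (ε : ℝ) (hε : ε ∈ Set.Ioc (0:ℝ) δ)
    -- the operators 𝒵_ε and 𝒵_ε⁽⁰⁾
    (Z Z0 : Lp 𝒦 2 (volume.restrict (Set.Ioi (0:ℝ))) →L[ℂ] ℋ)
    (hZ : ∀ f, Z f = Zfun C G V₀ ε δ f)
    (hZ0 : ∀ f, Z0 f = Z0fun C0 G ε δ f) :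
    C.Φ (iooFun ε δ) ∘L C0.Φ (iooFun (-δ) (-ε)) =
      Z ∘L ContinuousLinearMap.adjoint Z0 :=
  statement16_general C0 C V₀ G hHC δ ε hε Z Z0 hZ hZ0

end SpectralDensity
end
end
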